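/- arXiv:2001.03050 — 4 statements merged into one kernel-verified Lean document; each statement's English description precedes it below -/
import Mathlib

section
/- Let (X, d) be a metric space and let S be a finite set of 2m points in X (m ≥ 1). Let e_1 = {x_1, y_1}, ..., e_m = {x_m, y_m} be any perfect matching of S into m disjoint pairs. Then the sum of all pairwise distances within S, counting each unordered pair once, is at least m · Σ_{i=1}^m d(x_i, y_i). -/
/-! Every point `z` of `S` sees each matching edge `{x i, y i}` at total distance at least
`d(x i, y i)` by the triangle inequality, so summing `d(z, ·)` over `S` bounds the weight of the
matching. Summing this over the `2m` choices of `z` counts every unordered pair twice. -/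

open Finset

section

variable {X κ : Type*} [PseudoMetricSpace X] [Fintype κ]

theorem sum_dist_le_sum_dist_sumElim (x y : κ → X) (z : X) :
    ∑ i, dist (x i) (y i) ≤ ∑ q, dist z (Sum.elim x y q) :=
  calc ∑ i, dist (x i) (y i)
      ≤ ∑ i, (dist z (x i) + dist z (y i)) :=
        sum_le_sum fun i _ => dist_triangle_left _ _ _
    _ = ∑ q, dist z (Sum.elim x y q) := by
        rw [Fintype.sum_sum_type, sum_add_distrib]
        rfl

theorem two_mul_card_mul_sum_dist_le_sum_sum_dist (x y : κ → X) :
    (2 * Fintype.card κ : ℝ) * ∑ i, dist (x i) (y i)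
      ≤ ∑ p, ∑ q, dist (Sum.elim x y p) (Sum.elim x y q) :=
  calc (2 * Fintype.card κ : ℝ) * ∑ i, dist (x i) (y i)
      = ∑ _p : κ ⊕ κ, ∑ i, dist (x i) (y i) := by
        rw [sum_const, card_univ, Fintype.card_sum, nsmul_eq_mul]
        push_cast
        ring
    _ ≤ _ := sum_le_sum fun p _ => sum_dist_le_sum_dist_sumElim x y _

end

theorem sum_sum_image_univ {ι X M : Type*} [Fintype ι] [DecidableEq X] [AddCommMonoid M]
    {f : ι → X} (hf : Function.Injective f) (g : X → X → M) :
    ∑ u ∈ univ.image f, ∑ v ∈ univ.image f, g u v = ∑ p, ∑ q, g (f p) (f q) := by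
  simp only [sum_image fun a _ b _ h => hf h]

theorem stmt_1_general {X : Type*} [MetricSpace X] [DecidableEq X] (m : ℕ)
    (x y : Fin m → X)
    (hinj : Function.Injective (Sum.elim x y : Fin m ⊕ Fin m → X))
    (S : Finset X)
    (hS : S = Finset.image x Finset.univ ∪ Finset.image y Finset.univ) :
    (m : ℝ) * ∑ i, dist (x i) (y i) ≤ (∑ u ∈ S, ∑ v ∈ S, dist u v) / 2 := by
  have hS' : S = univ.image (Sum.elim x y) := by
    ext u
    simp [hS, Sum.exists]
  rw [hS', sum_sum_image_univ hinj, le_div_iff₀ two_pos]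
  have := two_mul_card_mul_sum_dist_le_sum_sum_dist x y
  rw [Fintype.card_fin] at this
  linarith

/-- For a set `S` of `2m` points with a perfect matching `{x i, y i}`,
the sum of all pairwise distances (each unordered pair counted once) is at least
`m` times the total weight of the matching. -/
theorem stmt_1 {X : Type*} [MetricSpace X] [DecidableEq X] (m : ℕ) (hm : 1 ≤ m)
    (x y : Fin m → X)
    (hinj : Function.Injective (Sum.elim x y : Fin m ⊕ Fin m → X))
    (S : Finset X)
    (hS : S = Finset.image x Finset.univ ∪ Finset.image y Finset.univ) :
    (m : ℝ) * ∑ i, dist (x i) (y i) ≤ (∑ u ∈ S, ∑ v ∈ S, dist u v) / 2 :=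
  stmt_1_general m x y hinj S hS
end

section
/- Let (X, d) be a metric space and S a finite set of 2m points in X. Let M = {e_1, ..., e_m} be a maximum-weight perfect matching of S, where the weight of a pair {u, v} is d(u, v). Then d(S) ≤ (2m − 1) · Σ_{i=1}^m d(e_i), where d(S) is the sum over all unordered pairs in S of their distance. -/
/-!
Exchange argument. For two matched pairs `{x i, y i}` and `{x j, y j}`, the re-pairings
`{x i, x j}, {y i, y j}` and `{x i, y j}, {x j, y i}` are no heavier than the optimum, so the four
distances between the two pairs add up to at most `2 (d i + d j)`. Summing this over all `i ≠ j`
and adding the matched edges themselves bounds the ordered double sum `2 d(S)` by `(4m − 2) W`.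
-/

open Finset

theorem Fintype.add_le_add_of_sum_le_sum {ι M : Type*} [Fintype ι] [AddCommGroup M]
    [PartialOrder M] [IsOrderedAddMonoid M] {f g : ι → M} {i j : ι} (hij : i ≠ j)
    (hfg : ∀ k, k ≠ i → k ≠ j → f k = g k) (h : ∑ k, f k ≤ ∑ k, g k) :
    f i + f j ≤ g i + g j := by
  have hsum : ∑ k, (g k - f k) = (g i - f i) + (g j - f j) :=
    Fintype.sum_eq_add i j hij fun k hk => sub_eq_zero.mpr (hfg k hk.1 hk.2).symm
  rw [sum_sub_distrib, sub_add_sub_comm] at hsum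
  rw [← sub_nonneg, ← hsum]
  exact sub_nonneg.mpr h

theorem Finset.image_univ_sumElim {X ι : Type*} [DecidableEq X] [Fintype ι] (x y : ι → X) :
    univ.image (Sum.elim x y) = univ.image x ∪ univ.image y := by
  ext z
  simp [Sum.exists]

/- A labelling `F : ι ⊕ ι → X` of the points stands for the perfect matching with edges
`{F (inl k), F (inr k)}`; composing with a permutation of `ι ⊕ ι` re-pairs the same points. -/
namespace PerfectMatching

variable {X ι : Type*} [PseudoMetricSpace X] [Fintype ι]

def weight (F : ι ⊕ ι → X) : ℝ := ∑ k, dist (F (.inl k)) (F (.inr k))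

@[simp]
theorem weight_sumElim (x y : ι → X) : weight (Sum.elim x y) = ∑ k, dist (x k) (y k) := rfl

def IsMaxWeight (F : ι ⊕ ι → X) : Prop := ∀ e : Equiv.Perm (ι ⊕ ι), weight (F ∘ e) ≤ weight F

variable [DecidableEq ι] {F : ι ⊕ ι → X}

theorem IsMaxWeight.add_le_add_of_swap (hF : IsMaxWeight F) {i j : ι} (hij : i ≠ j)
    {a b : ι ⊕ ι} (ha : a = .inl i ∨ a = .inr i ∨ a = .inl j ∨ a = .inr j)
    (hb : b = .inl i ∨ b = .inr i ∨ b = .inl j ∨ b = .inr j) :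
    dist (F (Equiv.swap a b (.inl i))) (F (Equiv.swap a b (.inr i))) +
        dist (F (Equiv.swap a b (.inl j))) (F (Equiv.swap a b (.inr j))) ≤
      dist (F (.inl i)) (F (.inr i)) + dist (F (.inl j)) (F (.inr j)) := by
  refine Fintype.add_le_add_of_sum_le_sum hij (fun k hki hkj => ?_) (hF (Equiv.swap a b))
  rcases ha with rfl | rfl | rfl | rfl <;> rcases hb with rfl | rfl | rfl | rfl <;>
    simp [Equiv.swap_apply_of_ne_of_ne, hki, hkj]

theorem IsMaxWeight.dist_inl_add_dist_inr_le (hF : IsMaxWeight F) {i j : ι} (hij : i ≠ j) :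
    dist (F (.inl i)) (F (.inl j)) + dist (F (.inr i)) (F (.inr j)) ≤
      dist (F (.inl i)) (F (.inr i)) + dist (F (.inl j)) (F (.inr j)) := by
  simpa [Equiv.swap_apply_of_ne_of_ne, hij, hij.symm] using
    hF.add_le_add_of_swap hij (a := .inl j) (b := .inr i) (by simp) (by simp)

theorem IsMaxWeight.dist_inl_inr_add_dist_inr_inl_le (hF : IsMaxWeight F) (i j : ι) :
    dist (F (.inl i)) (F (.inr j)) + dist (F (.inr i)) (F (.inl j)) ≤
      dist (F (.inl i)) (F (.inr i)) + dist (F (.inl j)) (F (.inr j)) := by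
  rcases eq_or_ne i j with rfl | hij
  · rw [dist_comm (F (.inr i))]
  simpa [Equiv.swap_apply_of_ne_of_ne, hij, hij.symm, dist_comm (F (.inr i))] using
    hF.add_le_add_of_swap hij (a := .inr i) (b := .inr j) (by simp) (by simp)

theorem IsMaxWeight.sum_sum_dist_le (hF : IsMaxWeight F) :
    ∑ a, ∑ b, dist (F a) (F b) ≤ (4 * Fintype.card ι - 2) * weight F := by
  set w : ι → ℝ := fun i => dist (F (.inl i)) (F (.inr i))
  have hpair : ∀ i j, dist (F (.inl i)) (F (.inl j)) + dist (F (.inl i)) (F (.inr j)) +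
      (dist (F (.inr i)) (F (.inl j)) + dist (F (.inr i)) (F (.inr j))) +
        (if i = j then 2 * w i else 0) ≤ 2 * (w i + w j) := by
    intro i j
    rcases eq_or_ne i j with rfl | hij
    · simp only [w, dist_self, dist_comm (F (.inr i)), if_true]
      linarith
    · have hsame := hF.dist_inl_add_dist_inr_le hij
      have hcross := hF.dist_inl_inr_add_dist_inr_inl_le i j
      simp only [hij, if_false, w]
      linarith
  have hsum := sum_le_sum fun i (_ : i ∈ univ) => sum_le_sum fun j (_ : j ∈ univ) => hpair i j
  simp only [sum_add_distrib, sum_ite_eq, mem_univ, if_true, ← mul_sum, sum_const,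
    card_univ, nsmul_eq_mul] at hsum
  simp only [Fintype.sum_sum_type, sum_add_distrib, weight]
  change _ ≤ _ * ∑ k, w k
  linarith

end PerfectMatching

theorem stmt_2_general {X : Type*} [MetricSpace X] [DecidableEq X] (m : ℕ)
    (S : Finset X)
    (x y : Fin m → X)
    (hmatching : Function.Injective (Sum.elim x y : Fin m ⊕ Fin m → X) ∧
      Finset.image x Finset.univ ∪ Finset.image y Finset.univ = S)
    (hmax : ∀ x' y' : Fin m → X,
      Function.Injective (Sum.elim x' y' : Fin m ⊕ Fin m → X) →
      Finset.image x' Finset.univ ∪ Finset.image y' Finset.univ = S →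
      ∑ i, dist (x' i) (y' i) ≤ ∑ i, dist (x i) (y i)) :
    (∑ u ∈ S, ∑ v ∈ S, dist u v) / 2 ≤ (2 * (m : ℝ) - 1) * ∑ i, dist (x i) (y i) := by
  obtain ⟨hinj, hS⟩ := hmatching
  set F := Sum.elim x y
  rw [← Finset.image_univ_sumElim] at hS
  have hopt : PerfectMatching.IsMaxWeight F := fun e => by
    refine hmax ((F ∘ e) ∘ .inl) ((F ∘ e) ∘ .inr) ?_ ?_
    · rw [Sum.elim_comp_inl_inr]
      exact hinj.comp e.injective
    · rw [← Finset.image_univ_sumElim, Sum.elim_comp_inl_inr, ← hS, ← Finset.image_image,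
        Finset.image_univ_equiv]
  have hdouble : ∑ u ∈ S, ∑ v ∈ S, dist u v = ∑ a, ∑ b, dist (F a) (F b) := by
    rw [← hS, Finset.sum_image fun a _ b _ => @hinj a b]
    exact Finset.sum_congr rfl fun a _ => Finset.sum_image fun a _ b _ => @hinj a b
  have hbound := hopt.sum_sum_dist_le
  rw [Fintype.card_fin, PerfectMatching.weight_sumElim] at hbound
  rw [hdouble]
  linarith

/-- If `{x i, y i}` is a maximum-weight perfect matching of a set `S` of `2m` points,
then `d(S) ≤ (2m − 1) · Σ_i d(x i, y i)`, where `d(S)` counts each unordered pair once. -/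
theorem stmt_2 {X : Type*} [MetricSpace X] [DecidableEq X] (m : ℕ) (hm : 1 ≤ m)
    (S : Finset X) (hcard : S.card = 2 * m)
    (x y : Fin m → X)
    (hmatching : Function.Injective (Sum.elim x y : Fin m ⊕ Fin m → X) ∧
      Finset.image x Finset.univ ∪ Finset.image y Finset.univ = S)
    (hmax : ∀ x' y' : Fin m → X,
      Function.Injective (Sum.elim x' y' : Fin m ⊕ Fin m → X) →
      Finset.image x' Finset.univ ∪ Finset.image y' Finset.univ = S →
      ∑ i, dist (x' i) (y' i) ≤ ∑ i, dist (x i) (y i)) :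
    (∑ u ∈ S, ∑ v ∈ S, dist u v) / 2 ≤ (2 * (m : ℝ) - 1) * ∑ i, dist (x i) (y i) :=
  stmt_2_general m S x y hmatching hmax
end

section
/- Let U be a finite set, f : 2^U → ℝ≥0 a monotone non-decreasing submodular function, d a metric on U, λ ≥ 0, and b ≥ 1. Define, for a set T of b + 1 elements enumerated as v_1, ..., v_{b+1}, the quantity g(v_i) = [f({v_1,...,v_i}) − f({v_1,...,v_i} \ {v_i})] + λ · Σ_{u ∈ T \ {v_i}} d(v_i, u), and define F(T) = f(T) + λ · Σ_{{u,v} ⊆ T} 2·d(u, v). Then F(T) = Σ_{i=1}^{b+1} g(v_i), and consequently if v_ℓ minimizes g over T and S = T \ {v_ℓ}, then F(S) ≥ ((b − 1)/(b + 1)) · F(T). -/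
/-!
Enumerate `T` as `v_0, …, v_b` and write `P_i = {v_j | j < i}`. The marginals
`f(P_{i+1}) - f(P_i)` telescope to `f(T)`, and the distance terms of `g` count every ordered
pair of `T` once, so `F(T) = Σ g`. Removing `v_ℓ` costs `f(T) - f(T \ v_ℓ)`, which by
submodularity is at most the marginal of `v_ℓ` at `P_ℓ ⊆ T \ v_ℓ`, plus twice its distance term;
as that marginal is nonnegative by monotonicity, the loss is at most `2 g(v_ℓ) ≤ 2 F(T)/(b+1)`.
-/

open Finset

section PrefixSet

variable {X : Type*} [DecidableEq X] {m : ℕ} (v : Fin m → X)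

def prefixSet (n : ℕ) : Finset X :=
  (univ.filter fun j : Fin m => (j : ℕ) < n).image v

@[simp]
lemma prefixSet_zero : prefixSet v 0 = ∅ := by
  simp [prefixSet]

lemma prefixSet_of_le {n : ℕ} (h : m ≤ n) : prefixSet v n = univ.image v := by
  rw [prefixSet, filter_true_of_mem fun j _ => j.is_lt.trans_le h]

lemma prefixSet_succ (i : Fin m) : prefixSet v (i + 1) = insert (v i) (prefixSet v i) := by
  rw [prefixSet, prefixSet, ← image_insert]
  congr 1
  ext j
  simp only [mem_filter, mem_univ, true_and, mem_insert, Fin.ext_iff]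
  omega

lemma prefixSet_subset_erase (hv : Function.Injective v) (i : Fin m) :
    prefixSet v i ⊆ (univ.image v).erase (v i) := by
  intro x hx
  obtain ⟨j, hj, rfl⟩ := mem_image.mp hx
  exact mem_erase.mpr ⟨hv.ne (Fin.ne_of_lt (mem_filter.mp hj).2), mem_image_of_mem v (mem_univ j)⟩

lemma sum_sub_prefixSet {G : Type*} [AddCommGroup G] (f : Finset X → G) :
    ∑ i : Fin m, (f (prefixSet v (i + 1)) - f (prefixSet v i)) = f (univ.image v) - f ∅ := by
  rw [Fin.sum_univ_eq_sum_range (fun n => f (prefixSet v (n + 1)) - f (prefixSet v n)),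
    sum_range_sub (fun n => f (prefixSet v n)), prefixSet_zero, prefixSet_of_le v le_rfl]

lemma sub_erase_le_sub_prefixSet (f : Finset X → ℝ)
    (hsub : ∀ A B : Finset X, A ⊆ B → ∀ x ∉ B, f (insert x B) - f B ≤ f (insert x A) - f A)
    (hv : Function.Injective v) (i : Fin m) :
    f (univ.image v) - f ((univ.image v).erase (v i)) ≤
      f (prefixSet v (i + 1)) - f (prefixSet v i) := by
  have h := hsub _ _ (prefixSet_subset_erase v hv i) (v i) (notMem_erase _ _)
  rwa [insert_erase (mem_image_of_mem v (mem_univ i)), ← prefixSet_succ] at h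

end PrefixSet

section Dist

variable {X : Type*} [PseudoMetricSpace X] [DecidableEq X]

lemma sum_sum_dist_insert {s : Finset X} {x : X} (hx : x ∉ s) :
    ∑ p ∈ insert x s, ∑ q ∈ insert x s, dist p q =
      2 * ∑ q ∈ s, dist x q + ∑ p ∈ s, ∑ q ∈ s, dist p q := by
  simp only [sum_insert hx, dist_self, zero_add, sum_add_distrib]
  rw [sum_congr rfl fun p _ => dist_comm p x]
  ring

lemma sum_sum_dist_erase_image {m : ℕ} {v : Fin m → X} (hv : Function.Injective v) :
    ∑ i, ∑ u ∈ (univ.image v).erase (v i), dist (v i) u =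
      ∑ p ∈ univ.image v, ∑ q ∈ univ.image v, dist p q := by
  rw [sum_image fun x _ y _ h => hv h]
  exact sum_congr rfl fun i _ => sum_erase _ (dist_self _)

lemma add_sum_dist_sub_two_mul_le_erase (f : Finset X → ℝ) (lam : ℝ) {T : Finset X} {x : X}
    (hx : x ∈ T) {μ : ℝ} (hμ : 0 ≤ μ) (hf : f T - f (T.erase x) ≤ μ) :
    f T + lam * ∑ p ∈ T, ∑ q ∈ T, dist p q - 2 * (μ + lam * ∑ u ∈ T.erase x, dist x u) ≤
      f (T.erase x) + lam * ∑ p ∈ T.erase x, ∑ q ∈ T.erase x, dist p q := by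
  conv_lhs => rw [← insert_erase hx, sum_sum_dist_insert (notMem_erase x T), insert_erase hx]
  linarith

end Dist

lemma div_mul_sum_le_of_sub_two_mul_le {n : ℕ} (g : Fin (n + 1) → ℝ) {l : Fin (n + 1)}
    (hmin : ∀ i, g l ≤ g i) {c : ℝ} (hc : ∑ i, g i - 2 * g l ≤ c) :
    ((n : ℝ) - 1) / ((n : ℝ) + 1) * ∑ i, g i ≤ c := by
  have hcard : ((n : ℝ) + 1) * g l ≤ ∑ i, g i := by
    simpa using card_nsmul_le_sum univ g (g l) fun i _ => hmin i
  have hpos : (0 : ℝ) < n + 1 := by positivity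
  rw [div_mul_eq_mul_div, div_le_iff₀ hpos]
  nlinarith

theorem stmt_5_general {X : Type*} [MetricSpace X] [DecidableEq X]
    (f : Finset X → ℝ) (hf0 : f ∅ = 0)
    (hmono : ∀ A B : Finset X, A ⊆ B → f A ≤ f B)
    (hsub : ∀ A B : Finset X, A ⊆ B → ∀ x ∉ B,
      f (insert x B) - f B ≤ f (insert x A) - f A)
    (lam : ℝ) (b : ℕ)
    (v : Fin (b + 1) → X) (hv : Function.Injective v)
    (T : Finset X) (hT : T = Finset.image v Finset.univ)
    (g : Fin (b + 1) → ℝ)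
    (hg : ∀ i, g i =
      (f (Finset.image v (Finset.univ.filter fun j : Fin (b + 1) => (j : ℕ) < (i : ℕ) + 1)) -
       f (Finset.image v (Finset.univ.filter fun j : Fin (b + 1) => (j : ℕ) < (i : ℕ)))) +
      lam * ∑ u ∈ T.erase (v i), dist (v i) u)
    (F : Finset X → ℝ)
    (hF : ∀ A : Finset X, F A = f A + lam * ∑ p ∈ A, ∑ q ∈ A, dist p q) :
    F T = ∑ i, g i ∧
    ∀ l : Fin (b + 1), (∀ i, g l ≤ g i) →
      ((b : ℝ) - 1) / ((b : ℝ) + 1) * F T ≤ F (T.erase (v l)) := by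
  subst hT
  have hg' : ∀ i, g i = (f (prefixSet v (i + 1)) - f (prefixSet v i)) +
      lam * ∑ u ∈ (univ.image v).erase (v i), dist (v i) u := hg
  have hdecomp : F (univ.image v) = ∑ i, g i := by
    simp only [hF, hg', sum_add_distrib, ← mul_sum, sum_sub_prefixSet, hf0, sub_zero,
      sum_sum_dist_erase_image hv]
  refine ⟨hdecomp, fun l hmin => hdecomp ▸ div_mul_sum_le_of_sub_two_mul_le g hmin ?_⟩
  have hmarg : 0 ≤ f (prefixSet v (l + 1)) - f (prefixSet v l) :=
    sub_nonneg.mpr (hmono _ _ ((prefixSet_succ v l).symm ▸ subset_insert _ _))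
  rw [← hdecomp, hF, hF, hg']
  exact add_sum_dist_sub_two_mul_le_erase f lam (mem_image_of_mem v (mem_univ l)) hmarg
    (sub_erase_le_sub_prefixSet v f hsub hv l)

/-- For `T = {v_1, …, v_{b+1}}`, `F(T) = f(T) + λ·Σ_{{u,w}⊆T} 2 d(u,w)` decomposes as
`F(T) = Σ_i g(v_i)` where `g(v_i)` is the `f`-marginal of `v_i` plus `λ` times its
distance to the rest of `T`; consequently removing the minimizer `v_ℓ` of `g` keeps
at least a `(b−1)/(b+1)` fraction of `F(T)`. -/
theorem stmt_5 {X : Type*} [MetricSpace X] [DecidableEq X]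
    (f : Finset X → ℝ) (hf0 : f ∅ = 0)
    (hmono : ∀ A B : Finset X, A ⊆ B → f A ≤ f B)
    (hsub : ∀ A B : Finset X, A ⊆ B → ∀ x ∉ B,
      f (insert x B) - f B ≤ f (insert x A) - f A)
    (lam : ℝ) (hlam : 0 ≤ lam) (b : ℕ) (hb : 1 ≤ b)
    (v : Fin (b + 1) → X) (hv : Function.Injective v)
    (T : Finset X) (hT : T = Finset.image v Finset.univ)
    (g : Fin (b + 1) → ℝ)
    (hg : ∀ i, g i =
      (f (Finset.image v (Finset.univ.filter fun j : Fin (b + 1) => (j : ℕ) < (i : ℕ) + 1)) -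
       f (Finset.image v (Finset.univ.filter fun j : Fin (b + 1) => (j : ℕ) < (i : ℕ)))) +
      lam * ∑ u ∈ T.erase (v i), dist (v i) u)
    (F : Finset X → ℝ)
    (hF : ∀ A : Finset X, F A = f A + lam * ∑ p ∈ A, ∑ q ∈ A, dist p q) :
    F T = ∑ i, g i ∧
    ∀ l : Fin (b + 1), (∀ i, g l ≤ g i) →
      ((b : ℝ) - 1) / ((b : ℝ) + 1) * F T ≤ F (T.erase (v l)) :=
  stmt_5_general f hf0 hmono hsub lam b v hv T hT g hg F hF
end

section
/- Let U be a finite set, f : 2^U → ℝ monotone non-decreasing submodular with f(∅) = 0, d a metric on U, λ ≥ 0, and b ≥ 2 even. Consider the greedy pairs algorithm that, starting from S^0 = ∅, at step i picks a pair e_i = {u, v} disjoint from S^{i−1} maximizing φ_e(S^{i−1}) := f(S^{i−1} ∪ e) − f(S^{i−1}) + 2λ(b−1) d(u, v), and sets S^i = S^{i−1} ∪ e_i, for i = 1, ..., b/2. Then the output S = S^{b/2} satisfies 4·G(S) ≥ G(O) for every O ⊆ U with |O| = b, where G(T) = f(T) + λ·Σ_{{u,v} ⊆ T} 2 d(u,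 v). -/
/-!
Pair the optimum `O` by a maximum-weight perfect matching `{x j, y j}`. Exchanging partners
between two matched pairs cannot increase the weight, so the four distances between two matched
pairs sum to at most twice their two matched distances; summing over all pairs of pairs gives
`D(O) ≤ 2(b - 1) ∑ d(x j, y j)`, where `D(T) = ∑_{p, q ∈ T} d(p, q)`. Conversely the triangle
inequality gives `D(S) ≥ b ∑ d(u i, v i)` for the greedy output `S`.

Adding the optimal pairs one at a time on top of `S` telescopes to
`f(S ∪ O) - f(S) + 2λ(b - 1) ∑ d(x j, y j) ≥ G(O) - f(S)`, and by submodularity each increment is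
at most the greedy gain of any step at which both points of the pair were still free. Charge
each optimal pair to the first greedy pair it meets: the optimal pairs being disjoint, every
greedy pair is charged at most twice, and the pairs meeting no greedy pair go to the cheapest
step, which has capacity to spare. So `G(O) - f(S)` is at most twice the total greedy gain
`f(S) + 2λ(b - 1) ∑ d(u i, v i)`, whence `G(O) ≤ 3 f(S) + 4λ D(S) ≤ 4 G(S)`.
-/

open Finset

section Submodular

variable {α : Type*} [DecidableEq α] {f : Finset α → ℝ}

theorem marginal_anti (hmono : ∀ A B : Finset α, A ⊆ B → f A ≤ f B)
    (hsub : ∀ A B : Finset α, A ⊆ B → ∀ x ∉ B, f (insert x B) - f B ≤ f (insert x A) - f A)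
    {A B : Finset α} (hAB : A ⊆ B) (q : α) :
    f (insert q B) - f B ≤ f (insert q A) - f A := by
  by_cases hq : q ∈ B
  · rw [insert_eq_self.2 hq, sub_self, sub_nonneg]
    exact hmono _ _ (subset_insert q A)
  · exact hsub A B hAB q hq

variable [PseudoMetricSpace α]

def pairGain (f : Finset α → ℝ) (c : ℝ) (p q : α) (A : Finset α) : ℝ :=
  f (insert p (insert q A)) - f A + c * dist p q

theorem pairGain_anti (hmono : ∀ A B : Finset α, A ⊆ B → f A ≤ f B)
    (hsub : ∀ A B : Finset α, A ⊆ B → ∀ x ∉ B, f (insert x B) - f B ≤ f (insert x A) - f A)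
    (c : ℝ) {A B : Finset α} (hAB : A ⊆ B) (p q : α) :
    pairGain f c p q B ≤ pairGain f c p q A := by
  have hp := marginal_anti hmono hsub (insert_subset_insert q hAB) p
  have hq := marginal_anti hmono hsub hAB q
  unfold pairGain
  linarith

theorem pairGain_nonneg (hmono : ∀ A B : Finset α, A ⊆ B → f A ≤ f B) {c : ℝ} (hc : 0 ≤ c)
    (p q : α) (A : Finset α) : 0 ≤ pairGain f c p q A := by
  have := hmono _ _ ((subset_insert q A).trans (subset_insert p _))
  have := mul_nonneg hc (dist_nonneg (x := p) (y := q))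
  unfold pairGain
  linarith

end Submodular

section PairsBefore

variable {α ι : Type*}

theorem eq_of_injective_sumElim {x y : ι → α} (h : Function.Injective (Sum.elim x y))
    {z : α} {i j : ι} (hi : z = x i ∨ z = y i) (hj : z = x j ∨ z = y j) : i = j := by
  rcases hi with rfl | rfl <;> rcases hj with hj | hj
  · exact Sum.inl_injective (h (a₁ := .inl i) (a₂ := .inl j) hj)
  · exact absurd (h (a₁ := .inl i) (a₂ := .inr j) hj) Sum.inl_ne_inr
  · exact absurd (h (a₁ := .inr i) (a₂ := .inl j) hj) Sum.inr_ne_inl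
  · exact Sum.inr_injective (h (a₁ := .inr i) (a₂ := .inr j) hj)

variable [DecidableEq α] {k : ℕ}

def pairsBefore (u v : Fin k → α) (n : ℕ) : Finset α :=
  (univ.filter fun j : Fin k => (j : ℕ) < n).biUnion fun j => {u j, v j}

variable (u v : Fin k → α)

theorem mem_pairsBefore {z : α} {n : ℕ} :
    z ∈ pairsBefore u v n ↔ ∃ j : Fin k, (j : ℕ) < n ∧ (z = u j ∨ z = v j) := by
  simp [pairsBefore]

theorem pairsBefore_zero : pairsBefore u v 0 = ∅ := by
  simp [pairsBefore]

theorem pairsBefore_succ (i : Fin k) :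
    pairsBefore u v (i + 1) = insert (u i) (insert (v i) (pairsBefore u v i)) := by
  ext z
  simp only [mem_pairsBefore, mem_insert, Nat.lt_succ_iff_lt_or_eq]
  constructor
  · rintro ⟨j, hj | hj, hz⟩
    · exact Or.inr (Or.inr ⟨j, hj, hz⟩)
    · obtain rfl := Fin.ext hj
      tauto
  · rintro (hz | hz | ⟨j, hj, hz⟩)
    · exact ⟨i, Or.inr rfl, Or.inl hz⟩
    · exact ⟨i, Or.inr rfl, Or.inr hz⟩
    · exact ⟨j, Or.inl hj, hz⟩

theorem pairsBefore_mono : Monotone (pairsBefore u v) := fun _ _ hmn _ hz => by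
  obtain ⟨j, hj, hz⟩ := (mem_pairsBefore u v).1 hz
  exact (mem_pairsBefore u v).2 ⟨j, hj.trans_le hmn, hz⟩

theorem pairsBefore_eq_image : pairsBefore u v k = univ.image (Sum.elim u v) := by
  ext z
  simp only [mem_pairsBefore, mem_image, mem_univ, true_and, Fin.is_lt, Sum.exists,
    Sum.elim_inl, Sum.elim_inr, eq_comm (b := z)]
  constructor
  · rintro ⟨j, hz | hz⟩
    exacts [Or.inl ⟨j, hz⟩, Or.inr ⟨j, hz⟩]
  · rintro (⟨j, hz⟩ | ⟨j, hz⟩)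
    exacts [⟨j, Or.inl hz⟩, ⟨j, Or.inr hz⟩]

theorem sum_pairGain_pairsBefore [PseudoMetricSpace α] (f : Finset α → ℝ) (c : ℝ)
    (A : Finset α) :
    ∑ i, pairGain f c (u i) (v i) (A ∪ pairsBefore u v i)
      = f (A ∪ pairsBefore u v k) - f A + c * ∑ i, dist (u i) (v i) := by
  have hstep : ∀ i : Fin k, pairGain f c (u i) (v i) (A ∪ pairsBefore u v i)
      = f (A ∪ pairsBefore u v (i + 1)) - f (A ∪ pairsBefore u v i) + c * dist (u i) (v i) := by
    intro i
    rw [pairsBefore_succ, pairGain, union_insert, union_insert]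
  simp only [hstep, sum_add_distrib, ← mul_sum]
  rw [Fin.sum_univ_eq_sum_range
      (fun i => f (A ∪ pairsBefore u v (i + 1)) - f (A ∪ pairsBefore u v i)),
    sum_range_sub (fun i => f (A ∪ pairsBefore u v i)), pairsBefore_zero, union_empty]

end PairsBefore

section Charging

variable {ι κ : Type*} [Fintype ι] [Fintype κ] {c : ι → ℝ} {Φ : κ → ℝ}

theorem sum_le_two_mul_sum_of_card_fiber_le_two [DecidableEq κ] [Nonempty κ] (hΦ : ∀ i, 0 ≤ Φ i)
    (hcard : Fintype.card ι ≤ Fintype.card κ) (H : Finset ι) (τ : ι → κ)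
    (hτ : ∀ j ∈ H, c j ≤ Φ (τ j)) (hfiber : ∀ i, #{j ∈ H | τ j = i} ≤ 2)
    (hfree : ∀ j ∉ H, ∀ i, c j ≤ Φ i) :
    ∑ j, c j ≤ 2 * ∑ i, Φ i := by
  classical
  obtain ⟨i₀, -, hi₀⟩ := univ.exists_min_image Φ univ_nonempty
  set m : κ → ℝ := fun i => #{j ∈ H | τ j = i}
  have hm : ∀ i, m i ≤ 2 := fun i => by simp only [m]; exact_mod_cast hfiber i
  have hcharged : ∑ j ∈ H, c j ≤ ∑ i, m i * Φ i := calc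
    ∑ j ∈ H, c j ≤ ∑ j ∈ H, Φ (τ j) := sum_le_sum hτ
    _ = ∑ i, m i * Φ i := by
      rw [← sum_fiberwise_of_maps_to' (fun j _ => mem_univ (τ j))]
      simp [m]
  have hspare : (#Hᶜ : ℝ) ≤ ∑ i, (2 - m i) := by
    have hH : #H = ∑ i, #{j ∈ H | τ j = i} :=
      card_eq_sum_card_fiberwise fun j _ => mem_univ (τ j)
    have hsplit := card_add_card_compl H
    have hcardR : (Fintype.card ι : ℝ) ≤ Fintype.card κ := by exact_mod_cast hcard
    simp only [sum_sub_distrib, sum_const, card_univ, nsmul_eq_mul, m]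
    rw [← Nat.cast_sum, ← hH]
    have : (#H : ℝ) + #Hᶜ = Fintype.card ι := by exact_mod_cast hsplit
    have := Nat.cast_nonneg (α := ℝ) #H
    linarith
  have hfree' : ∑ j ∈ Hᶜ, c j ≤ ∑ i, (2 - m i) * Φ i := calc
    ∑ j ∈ Hᶜ, c j ≤ #Hᶜ • Φ i₀ :=
      sum_le_card_nsmul _ _ _ fun j hj => hfree j (mem_compl.1 hj) i₀
    _ ≤ (∑ i, (2 - m i)) * Φ i₀ := by
      rw [nsmul_eq_mul]; exact mul_le_mul_of_nonneg_right hspare (hΦ i₀)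
    _ ≤ ∑ i, (2 - m i) * Φ i := by
      rw [sum_mul]
      exact sum_le_sum fun i _ =>
        mul_le_mul_of_nonneg_left (hi₀ i (mem_univ i)) (sub_nonneg.2 (hm i))
  rw [← sum_add_sum_compl H c, mul_sum]
  calc _ ≤ ∑ i, m i * Φ i + ∑ i, (2 - m i) * Φ i := add_le_add hcharged hfree'
    _ = _ := by rw [← sum_add_distrib]; congr 1; ext i; ring

theorem sum_le_two_mul_sum_of_charging [LinearOrder κ] (R : ι → κ → Prop) [DecidableRel R]
    (hΦ : ∀ i, 0 ≤ Φ i) (hcard : Fintype.card ι ≤ Fintype.card κ)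
    (hR : ∀ i, #{j | R j i} ≤ 2) (hc : ∀ j i, (∀ i' < i, ¬ R j i') → c j ≤ Φ i) :
    ∑ j, c j ≤ 2 * ∑ i, Φ i := by
  classical
  rcases isEmpty_or_nonempty κ with hκ | hκ
  · have : IsEmpty ι := Fintype.card_eq_zero_iff.1 (by simpa using hcard)
    simp
  set H : Finset ι := {j | ∃ i, R j i}
  have hfirst : ∀ j ∈ H, ∃ i, R j i ∧ ∀ i' < i, ¬ R j i' := by
    intro j hj
    obtain ⟨i₀, hi₀⟩ : ∃ i, R j i := by simpa [H] using hj
    obtain ⟨i, hi, hmin⟩ := wellFounded_lt.has_min {i | R j i} ⟨i₀, hi₀⟩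
    exact ⟨i, hi, fun i' hi' hR => hmin i' hR hi'⟩
  choose! τ hτR hτmin using hfirst
  refine sum_le_two_mul_sum_of_card_fiber_le_two hΦ hcard H τ
    (fun j hj => hc j (τ j) (hτmin j hj)) (fun i => (card_le_card ?_).trans (hR i))
    (fun j hj i => hc j i fun i' _ hR => hj (by simpa [H] using ⟨i', hR⟩))
  intro j hj
  simp only [mem_filter] at hj ⊢
  exact ⟨mem_univ j, hj.2 ▸ hτR j hj.1⟩

end Charging

section Pairing

variable {α ι : Type*} [PseudoMetricSpace α]

def pairBlock (x y : ι → α) (i j : ι) : ℝ :=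
  dist (x i) (x j) + dist (x i) (y j) + dist (y i) (x j) + dist (y i) (y j)

theorem add_le_pairBlock (x y : ι → α) (i j : ι) :
    dist (x i) (y i) + dist (x j) (y j) ≤ pairBlock x y i j := by
  have := dist_triangle (x i) (x j) (y i)
  have := dist_triangle (x j) (x i) (y j)
  have := dist_triangle (x i) (y j) (y i)
  have := dist_triangle (x j) (y i) (y j)
  simp only [pairBlock, dist_comm (x j) (x i), dist_comm (y j) (y i), dist_comm (x j) (y i)] at *
  linarith

theorem pairBlock_self (x y : ι → α) (i : ι) : pairBlock x y i i = 2 * dist (x i) (y i) := by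
  simp only [pairBlock, dist_self, dist_comm (y i) (x i)]
  ring

variable [Fintype ι]

theorem sum_dist_image_sumElim [DecidableEq α] {x y : ι → α}
    (h : Function.Injective (Sum.elim x y)) :
    ∑ p ∈ univ.image (Sum.elim x y), ∑ q ∈ univ.image (Sum.elim x y), dist p q
      = ∑ i, ∑ j, pairBlock x y i j := by
  simp only [sum_image fun a _ b _ hab => h hab, Fintype.sum_sum_type, Sum.elim_inl,
    Sum.elim_inr, pairBlock, sum_add_distrib]
  ring

theorem two_mul_card_mul_sum_dist_le (x y : ι → α) :
    2 * Fintype.card ι * ∑ i, dist (x i) (y i) ≤ ∑ i, ∑ j, pairBlock x y i j := calc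
  _ = ∑ i : ι, ∑ j : ι, (dist (x i) (y i) + dist (x j) (y j)) := by
    simp only [sum_add_distrib, sum_const, card_univ, nsmul_eq_mul, ← mul_sum]
    ring
  _ ≤ _ := sum_le_sum fun i _ => sum_le_sum fun j _ => add_le_pairBlock x y i j

theorem add_le_add_of_sum_le_sum {g g' : ι → ℝ} {i j : ι} (hij : i ≠ j)
    (hoff : ∀ a, a ≠ i → a ≠ j → g' a = g a) (h : ∑ a, g' a ≤ ∑ a, g a) :
    g' i + g' j ≤ g i + g j := by
  have hdiff : ∑ a, (g' a - g a) = (g' i - g i) + (g' j - g j) :=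
    Fintype.sum_eq_add i j hij fun a ha => sub_eq_zero.2 (hoff a ha.1 ha.2)
  rw [sum_sub_distrib] at hdiff
  linarith

theorem pairBlock_le_of_forall_perm [DecidableEq ι] {x y : ι → α}
    (hmax : ∀ σ : Equiv.Perm (ι ⊕ ι), ∑ a, dist (Sum.elim x y (σ (.inl a)))
      (Sum.elim x y (σ (.inr a))) ≤ ∑ a, dist (x a) (y a))
    {i j : ι} (hij : i ≠ j) :
    pairBlock x y i j ≤ 2 * (dist (x i) (y i) + dist (x j) (y j)) := by
  have h₁ := add_le_add_of_sum_le_sum hij (g := fun a => dist (x a) (y a))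
    (fun a hai haj => by simp [Equiv.swap_apply_of_ne_of_ne, hai, haj])
    (hmax (Equiv.swap (.inl j) (.inr i)))
  have h₂ := add_le_add_of_sum_le_sum hij (g := fun a => dist (x a) (y a))
    (fun a hai haj => by simp [Equiv.swap_apply_of_ne_of_ne, hai, haj])
    (hmax (Equiv.swap (.inr i) (.inr j)))
  simp only [ne_eq, Sum.inl.injEq, Sum.inr.injEq, hij, Ne.symm hij, not_false_eq_true,
    reduceCtorEq, Equiv.swap_apply_of_ne_of_ne, Equiv.swap_apply_left, Equiv.swap_apply_right,
    Sum.elim_inl, Sum.elim_inr] at h₁ h₂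
  simp only [pairBlock, dist_comm (y i) (x j)] at *
  linarith

theorem sum_pairBlock_le_of_forall_perm [DecidableEq ι] {x y : ι → α}
    (hmax : ∀ σ : Equiv.Perm (ι ⊕ ι), ∑ a, dist (Sum.elim x y (σ (.inl a)))
      (Sum.elim x y (σ (.inr a))) ≤ ∑ a, dist (x a) (y a)) :
    ∑ i, ∑ j, pairBlock x y i j ≤ (4 * Fintype.card ι - 2) * ∑ i, dist (x i) (y i) := by
  have hblock : ∀ i j, pairBlock x y i j + (if i = j then 2 * dist (x i) (y i) else 0)
      ≤ 2 * (dist (x i) (y i) + dist (x j) (y j)) := by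
    intro i j
    split_ifs with hij
    · subst hij; rw [pairBlock_self]; linarith
    · simpa using pairBlock_le_of_forall_perm hmax hij
  have hsum := sum_le_sum fun i (_ : i ∈ univ) => sum_le_sum fun j (_ : j ∈ univ) => hblock i j
  simp only [sum_add_distrib, sum_ite_eq, mem_univ, if_true, ← mul_sum, sum_const, card_univ,
    nsmul_eq_mul] at hsum
  linarith

theorem exists_pairing_sum_dist_le [DecidableEq α] {k : ℕ} (O : Finset α) (hO : #O = 2 * k) :
    ∃ x y : Fin k → α, Function.Injective (Sum.elim x y) ∧ univ.image (Sum.elim x y) = O ∧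
      ∑ p ∈ O, ∑ q ∈ O, dist p q ≤ (4 * k - 2) * ∑ j, dist (x j) (y j) := by
  have : Nonempty (Fin k ⊕ Fin k ≃ O) := Fintype.card_eq.1 (by simp [hO, two_mul])
  obtain ⟨e, he⟩ := Finite.exists_max fun e : Fin k ⊕ Fin k ≃ O =>
    ∑ j, dist (e (.inl j) : α) (e (.inr j))
  set F : Fin k ⊕ Fin k → α := fun a => e a
  have hF : Sum.elim (F ∘ .inl) (F ∘ .inr) = F := Sum.elim_comp_inl_inr F
  have hinj : Function.Injective F := Subtype.val_injective.comp e.injective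
  have himage : univ.image F = O := by
    ext z
    simp only [mem_image, mem_univ, true_and, F]
    exact ⟨fun ⟨a, ha⟩ => ha ▸ (e a).2, fun hz => ⟨e.symm ⟨z, hz⟩, by simp⟩⟩
  refine ⟨F ∘ .inl, F ∘ .inr, hF ▸ hinj, hF ▸ himage, ?_⟩
  rw [← himage, ← hF, sum_dist_image_sumElim (hF ▸ hinj)]
  simpa using sum_pairBlock_le_of_forall_perm (x := F ∘ .inl) (y := F ∘ .inr)
    fun σ => by simpa [hF] using he (σ.trans e)

end Pairing

section Greedy

variable {α : Type*} [PseudoMetricSpace α] [DecidableEq α] {k : ℕ}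

def IsGreedyPairs (f : Finset α → ℝ) (c : ℝ) (u v : Fin k → α) : Prop :=
  ∀ i : Fin k, ∀ p q : α, p ≠ q → p ∉ pairsBefore u v i → q ∉ pairsBefore u v i →
    pairGain f c p q (pairsBefore u v i) ≤ pairGain f c (u i) (v i) (pairsBefore u v i)

omit [PseudoMetricSpace α] in
theorem not_mem_pairsBefore_of_forall_lt {u v : Fin k → α} {z : α} {i : Fin k}
    (h : ∀ i' < i, ¬ (z = u i' ∨ z = v i')) : z ∉ pairsBefore u v i := by
  rw [mem_pairsBefore]
  rintro ⟨i', hi', hz⟩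
  exact h i' hi' hz

theorem sum_pairGain_le_of_isGreedyPairs {f : Finset α → ℝ}
    (hmono : ∀ A B : Finset α, A ⊆ B → f A ≤ f B)
    (hsub : ∀ A B : Finset α, A ⊆ B → ∀ x ∉ B, f (insert x B) - f B ≤ f (insert x A) - f A)
    {c : ℝ} (hc : 0 ≤ c) {u v : Fin k → α} (hgreedy : IsGreedyPairs f c u v)
    {x y : Fin k → α} (hxy : Function.Injective (Sum.elim x y))
    (B : Fin k → Finset α) (hB : ∀ j, pairsBefore u v k ⊆ B j) :
    ∑ j, pairGain f c (x j) (y j) (B j)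
      ≤ 2 * ∑ i, pairGain f c (u i) (v i) (pairsBefore u v i) := by
  refine sum_le_two_mul_sum_of_charging
    (fun j i => (x j = u i ∨ x j = v i) ∨ (y j = u i ∨ y j = v i))
    (fun i => pairGain_nonneg hmono hc _ _ _) le_rfl (fun i => ?_) (fun j i hj => ?_)
  · refine (card_le_card_of_forall_subsingleton (fun j z => z = x j ∨ z = y j)
      (t := {u i, v i}) (fun j hj => ?_) fun z _ j hj j' hj' =>
        eq_of_injective_sumElim hxy hj.2 hj'.2).trans card_le_two
    simp only [mem_filter, mem_univ, true_and] at hj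
    rcases hj with (h | h) | (h | h)
    exacts [⟨u i, by simp, Or.inl h.symm⟩, ⟨v i, by simp, Or.inl h.symm⟩,
      ⟨u i, by simp, Or.inr h.symm⟩, ⟨v i, by simp, Or.inr h.symm⟩]
  · have hx := not_mem_pairsBefore_of_forall_lt fun i' hi' h => hj i' hi' (Or.inl h)
    have hy := not_mem_pairsBefore_of_forall_lt fun i' hi' h => hj i' hi' (Or.inr h)
    exact (pairGain_anti hmono hsub c ((pairsBefore_mono u v i.is_lt.le).trans (hB j)) _ _).trans
      (hgreedy i _ _ (hxy.ne (a₁ := .inl j) (a₂ := .inr j) Sum.inl_ne_inr) hx hy)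

end Greedy

theorem stmt_15_general {α : Type*} [MetricSpace α] [DecidableEq α]
    (f : Finset α → ℝ) (hf0 : f ∅ = 0)
    (hmono : ∀ A B : Finset α, A ⊆ B → f A ≤ f B)
    (hsub : ∀ A B : Finset α, A ⊆ B → ∀ x ∉ B,
      f (insert x B) - f B ≤ f (insert x A) - f A)
    (lam : ℝ) (hlam : 0 ≤ lam)
    (b k : ℕ) (hb : b = 2 * k) (hk : 1 ≤ k)
    (u v : Fin k → α)
    (hinj : Function.Injective (Sum.elim u v : Fin k ⊕ Fin k → α))
    (Sset : ℕ → Finset α)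
    (hSset : ∀ i : ℕ, Sset i =
      (Finset.univ.filter fun j : Fin k => (j : ℕ) < i).biUnion fun j => {u j, v j})
    (phi : α → α → Finset α → ℝ)
    (hphi : ∀ p q (A : Finset α), phi p q A =
      f (insert p (insert q A)) - f A + 2 * lam * ((b : ℝ) - 1) * dist p q)
    (hgreedy : ∀ i : Fin k, ∀ p q : α, p ≠ q → p ∉ Sset (i : ℕ) → q ∉ Sset (i : ℕ) →
      phi p q (Sset (i : ℕ)) ≤ phi (u i) (v i) (Sset (i : ℕ)))
    (G : Finset α → ℝ)
    (hG : ∀ T : Finset α, G T = f T + lam * ∑ p ∈ T, ∑ q ∈ T, dist p q) :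
    ∀ O : Finset α, O.card = b → G O ≤ 4 * G (Sset k) := by
  intro O hO
  subst hb
  obtain rfl : Sset = pairsBefore u v := funext hSset
  set c := 2 * lam * (((2 * k : ℕ) : ℝ) - 1) with hc_def
  obtain rfl : phi = pairGain f c := by funext p q A; exact hphi p q A
  obtain ⟨x, y, hxy, rfl, hDO⟩ := exists_pairing_sum_dist_le O hO
  have hk' : (1 : ℝ) ≤ k := by exact_mod_cast hk
  push_cast at hc_def
  have hcharge := sum_pairGain_le_of_isGreedyPairs hmono hsub
    (hc_def ▸ mul_nonneg (by positivity) (by linarith)) hgreedy hxy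
    (fun j => pairsBefore u v k ∪ pairsBefore x y j) fun _ => subset_union_left
  have hgreedySum := sum_pairGain_pairsBefore u v f c ∅
  simp only [empty_union, hf0, sub_zero] at hgreedySum
  rw [sum_pairGain_pairsBefore, hgreedySum] at hcharge
  have hfO : f (univ.image (Sum.elim x y)) ≤ f (pairsBefore u v k ∪ pairsBefore x y k) :=
    hmono _ _ (pairsBefore_eq_image x y ▸ subset_union_right)
  have hDS : 2 * k * ∑ i, dist (u i) (v i)
      ≤ ∑ p ∈ pairsBefore u v k, ∑ q ∈ pairsBefore u v k, dist p q := by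
    simpa [pairsBefore_eq_image, sum_dist_image_sumElim hinj] using
      two_mul_card_mul_sum_dist_le u v
  have hfS : 0 ≤ f (pairsBefore u v k) := hf0 ▸ hmono ∅ _ (empty_subset _)
  have hV : 0 ≤ ∑ i, dist (u i) (v i) := sum_nonneg fun _ _ => dist_nonneg
  rw [hc_def] at hcharge
  rw [hG, hG]
  nlinarith [mul_le_mul_of_nonneg_left hDO hlam, mul_le_mul_of_nonneg_left hDS hlam,
    mul_nonneg hlam hV]

/-- GreedyPairs is a 4-approximation for single-cluster diversification with a monotone
submodular quality function and even budget `b = 2k`: if at each step `i` the pair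
`{u i, v i}` maximizes `φ_e(S^{i−1}) = f(S^{i−1} ∪ e) − f(S^{i−1}) + 2λ(b−1)d(e)` over
pairs disjoint from `S^{i−1}`, then the output `S = S^{k}` satisfies `4·G(S) ≥ G(O)`
for every `O` of size `b`, where `G(T) = f(T) + λ·Σ_{{p,q}⊆T} 2 d(p,q)`. -/
theorem stmt_15 {α : Type*} [MetricSpace α] [Fintype α] [DecidableEq α]
    (f : Finset α → ℝ) (hf0 : f ∅ = 0)
    (hmono : ∀ A B : Finset α, A ⊆ B → f A ≤ f B)
    (hsub : ∀ A B : Finset α, A ⊆ B → ∀ x ∉ B,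
      f (insert x B) - f B ≤ f (insert x A) - f A)
    (lam : ℝ) (hlam : 0 ≤ lam)
    (b k : ℕ) (hb : b = 2 * k) (hk : 1 ≤ k)
    (u v : Fin k → α)
    (hinj : Function.Injective (Sum.elim u v : Fin k ⊕ Fin k → α))
    (Sset : ℕ → Finset α)
    (hSset : ∀ i : ℕ, Sset i =
      (Finset.univ.filter fun j : Fin k => (j : ℕ) < i).biUnion fun j => {u j, v j})
    (phi : α → α → Finset α → ℝ)
    (hphi : ∀ p q (A : Finset α), phi p q A =
      f (insert p (insert q A)) - f A + 2 * lam * ((b : ℝ) - 1) * dist p q)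
    (hgreedy : ∀ i : Fin k, ∀ p q : α, p ≠ q → p ∉ Sset (i : ℕ) → q ∉ Sset (i : ℕ) →
      phi p q (Sset (i : ℕ)) ≤ phi (u i) (v i) (Sset (i : ℕ)))
    (G : Finset α → ℝ)
    (hG : ∀ T : Finset α, G T = f T + lam * ∑ p ∈ T, ∑ q ∈ T, dist p q) :
    ∀ O : Finset α, O.card = b → G O ≤ 4 * G (Sset k) :=
  stmt_15_general f hf0 hmono hsub lam hlam b k hb hk u v hinj Sset hSset phi hphi hgreedy G hG
end
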